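/- Let k ≥ 1, n = 2k, fix positive integers m_1,…,m_n and let Γ = {r ∈ ℤⁿ : m_i divides r_i for all i}. Let W be a nonzero finite-dimensional module over the symplectic Lie algebra 𝔰𝔭_{2k}(ℂ) that is irreducible (the only subspaces of W invariant under the action of every matrix in 𝔰𝔭_{2k}(ℂ) are 0 and W), and fix α, β ∈ ℂⁿ. On L(W) = W ⊗ ℂ[Γ] define linear operators: for 0 ≠ r ∈ Γ, π(r)(w ⊗ t^k) = ⟨r̄, k + β⟩ w ⊗ t^{k+r} + ((r·r̄ᵀ)·w) ⊗ t^{k+r}; for u ∈ ℂⁿ, δ(u)(w ⊗ t^k) = ⟨u, α + k⟩ w ⊗ t^k; and for r ∈ Γ, μ(r)(w ⊗ t^k) = w ⊗ t^{k+r}. Then the only subspaces of L(W) invariant under all of the operators π(r), δ(u), μ(r) are 0 and L(W). -/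

import Mathlib

noncomputable section

open scoped BigOperators Matrix

attribute [local instance 100] LieRing.ofAssociativeRing

/-- For `r ∈ ℂ^{2k}` (indexed by `Fin k ⊕ Fin k`), `bar r = r̄ = (r_{k+1},…,r_{2k},−r_1,…,−r_k)`. -/
def bar {k : ℕ} (r : Fin k ⊕ Fin k → ℂ) : Fin k ⊕ Fin k → ℂ :=
  Sum.elim (fun i => r (Sum.inr i)) (fun i => - r (Sum.inl i))

/-- The standard symmetric bilinear form `⟨u, v⟩ = ∑ i, u i * v i` on `ℂ^{2k}`. -/
def pair {k : ℕ} (u v : Fin k ⊕ Fin k → ℂ) : ℂ := ∑ i, u i * v i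

/-- The coercion `ℤ^{2k} ⊆ ℂ^{2k}`. -/
def zc {k : ℕ} (r : Fin k ⊕ Fin k → ℤ) : Fin k ⊕ Fin k → ℂ := fun i => (r i : ℂ)

/-- The standard symplectic structure matrix `J = [[0, I_k],[−I_k, 0]]`. -/
def Jmat (k : ℕ) : Matrix (Fin k ⊕ Fin k) (Fin k ⊕ Fin k) ℂ :=
  Matrix.fromBlocks 0 1 (-1) 0

/-- The symplectic Lie algebra `𝔰𝔭_{2k}(ℂ) = {A : Aᵀ J + J A = 0}`. -/
def sp (k : ℕ) : LieSubalgebra ℂ (Matrix (Fin k ⊕ Fin k) (Fin k ⊕ Fin k) ℂ) :=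
  skewAdjointMatricesLieSubalgebra (Jmat k)

/-- The outer product `r·r̄ᵀ` lies in `𝔰𝔭_{2k}(ℂ)`. -/
lemma outer_mem_sp (k : ℕ) (r : Fin k ⊕ Fin k → ℂ) :
    Matrix.vecMulVec r (bar r) ∈ sp k := by
  rw [sp, mem_skewAdjointMatricesLieSubalgebra, mem_skewAdjointMatricesSubmodule]
  show _ᵀ * Jmat k = Jmat k * _
  ext i j
  simp only [Matrix.mul_apply, Matrix.transpose_apply, Matrix.vecMulVec_apply, Jmat,
    Matrix.fromBlocks, Fintype.sum_sum_type, Matrix.neg_apply, Matrix.one_apply,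
    Matrix.zero_apply, Matrix.of_apply, bar]
  cases i <;> cases j <;>
    simp [Sum.elim, Matrix.one_apply, Finset.sum_ite_eq, Finset.sum_ite_eq', mul_comm]

/-- The lattice `Γ = {r ∈ ℤⁿ : m_i ∣ r_i for all i}`. -/
def Gamma (k : ℕ) (m : Fin k ⊕ Fin k → ℕ) : AddSubgroup (Fin k ⊕ Fin k → ℤ) where
  carrier := {r | ∀ i, (m i : ℤ) ∣ r i}
  add_mem' := by
    intro a b ha hb i
    simpa using dvd_add (ha i) (hb i)
  zero_mem' := by
    intro i
    simp
  neg_mem' := by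
    intro a ha i
    simpa using (ha i).neg_right

/-- `π(r)`: on `L(W) = W ⊗ ℂ[Γ]` (realized as `Γ →₀ W`),
`π(r)(w ⊗ t^p) = ⟨r̄, p + β⟩ w ⊗ t^{p+r} + ((r·r̄ᵀ)·w) ⊗ t^{p+r}`. -/
def piOp {k : ℕ} {m : Fin k ⊕ Fin k → ℕ} {W : Type*} [AddCommGroup W] [Module ℂ W]
    (act : sp k →ₗ⁅ℂ⁆ Module.End ℂ W) (β : Fin k ⊕ Fin k → ℂ) (r : Gamma k m) :
    (Gamma k m →₀ W) →ₗ[ℂ] (Gamma k m →₀ W) :=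
  Finsupp.lsum ℂ fun p : Gamma k m =>
    Finsupp.lsingle (p + r) ∘ₗ
      ((pair (bar (zc (r : Fin k ⊕ Fin k → ℤ))) (zc (p : Fin k ⊕ Fin k → ℤ) + β)) •
          (LinearMap.id : W →ₗ[ℂ] W)
        + (act ⟨Matrix.vecMulVec (zc (r : Fin k ⊕ Fin k → ℤ)) (bar (zc (r : Fin k ⊕ Fin k → ℤ))),
            outer_mem_sp k _⟩ : W →ₗ[ℂ] W))

/-- `δ(u)`: `δ(u)(w ⊗ t^p) = ⟨u, α + p⟩ w ⊗ t^p`. -/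
def deltaOp {k : ℕ} {m : Fin k ⊕ Fin k → ℕ} (W : Type*) [AddCommGroup W] [Module ℂ W]
    (α : Fin k ⊕ Fin k → ℂ) (u : Fin k ⊕ Fin k → ℂ) :
    (Gamma k m →₀ W) →ₗ[ℂ] (Gamma k m →₀ W) :=
  Finsupp.lsum ℂ fun p : Gamma k m =>
    (pair u (α + zc (p : Fin k ⊕ Fin k → ℤ))) • Finsupp.lsingle p

/-- `μ(r)`: `μ(r)(w ⊗ t^p) = w ⊗ t^{p+r}`. -/
def muOp {k : ℕ} {m : Fin k ⊕ Fin k → ℕ} (W : Type*) [AddCommGroup W] [Module ℂ W]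
    (r : Gamma k m) : (Gamma k m →₀ W) →ₗ[ℂ] (Gamma k m →₀ W) :=
  Finsupp.lsum ℂ fun p : Gamma k m => (Finsupp.lsingle (p + r) : W →ₗ[ℂ] Gamma k m →₀ W)

/-! The weight operators `δ(u)` separate the points of `Γ`, so an invariant subspace `U` contains
the homogeneous components of its elements, and the shifts `μ(r)` make all of them copies of
`V = {w | w ⊗ t⁰ ∈ U}`. Removing the scalar part of `π(r)` shows that `V` is stable under every
`r·r̄ᵀ`. These matrices span `𝔰𝔭_{2k}`: `A ↦ A J` identifies `𝔰𝔭_{2k}` with the symmetric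
matrices, and polarising `r rᵀ` over the vectors `m_i e_i + m_j e_j ∈ Γ` gives all of
`e_i e_jᵀ + e_j e_iᵀ`. Irreducibility of `W` then leaves `V`, hence `U`, equal to `0` or
everything. -/

open Matrix in
theorem Matrix.IsSymm.mem_span_vecMulVec_self {K ι : Type*} [Field K] [NeZero (2 : K)]
    [Fintype ι] [DecidableEq ι] {L : AddSubmonoid (ι → K)}
    (hL : ∀ i, ∃ c : K, c ≠ 0 ∧ Pi.single i c ∈ L) {S : Matrix ι ι K} (hS : S.IsSymm) :
    S ∈ Submodule.span K ((fun v => vecMulVec v v) '' (L : Set (ι → K))) := by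
  set T := Submodule.span K ((fun v => vecMulVec v v) '' (L : Set (ι → K)))
  have hsq : ∀ v ∈ L, vecMulVec v v ∈ T := fun v hv => Submodule.subset_span ⟨v, hv, rfl⟩
  have hpolar : ∀ u ∈ L, ∀ v ∈ L, vecMulVec u v + vecMulVec v u ∈ T := by
    intro u hu v hv
    have : vecMulVec u v + vecMulVec v u
        = vecMulVec (u + v) (u + v) - vecMulVec u u - vecMulVec v v := by
      simp only [add_vecMulVec, vecMulVec_add]; abel
    rw [this]
    exact sub_mem (sub_mem (hsq _ (add_mem hu hv)) (hsq u hu)) (hsq v hv)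
  have hbasis : ∀ i j, single i j (1 : K) + single j i 1 ∈ T := by
    intro i j
    obtain ⟨c, hc, hci⟩ := hL i
    obtain ⟨d, hd, hdj⟩ := hL j
    have hsingle : ∀ (a b : ι) (x y : K),
        vecMulVec (Pi.single a x) (Pi.single b y) = (x * y) • single a b 1 := by
      intro a b x y
      ext p q
      by_cases hp : a = p <;> by_cases hq : b = q <;> simp [vecMulVec_apply, hp, hq]
    have h := hpolar _ hci _ hdj
    rw [hsingle, hsingle, mul_comm d c, ← smul_add] at h
    exact (Submodule.smul_mem_iff T (mul_ne_zero hc hd)).mp h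
  have hdecomp : S = (2 : K)⁻¹ • ∑ i, ∑ j, S i j • (single i j (1 : K) + single j i 1) := by
    ext a b
    simp only [smul_add, smul_single, smul_eq_mul, mul_one, Finset.sum_add_distrib, smul_apply,
      add_apply, sum_apply, single_apply, ite_and, Finset.sum_ite_irrel, Finset.sum_ite_eq',
      Finset.mem_univ, ↓reduceIte, Finset.sum_const_zero, hS.apply a b]
    rw [← two_mul, inv_mul_cancel_left₀ two_ne_zero]
  rw [hdecomp]
  exact Submodule.smul_mem _ _ (Submodule.sum_mem _ fun i _ =>
    Submodule.sum_mem _ fun j _ => Submodule.smul_mem _ _ (hbasis i j))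

theorem Submodule.single_apply_mem_of_separating {ι κ K M : Type*} [Field K] [AddCommGroup M]
    [Module K M] {U : Submodule K (ι →₀ M)} (D : κ → Module.End K (ι →₀ M)) (χ : κ → ι → K)
    (hD : ∀ u f i, D u f i = χ u i • f i) (hχ : ∀ i j, i ≠ j → ∃ u, χ u i ≠ χ u j)
    (hU : ∀ u, ∀ f ∈ U, D u f ∈ U) {f : ι →₀ M} (hf : f ∈ U) (i : ι) :
    Finsupp.single i (f i) ∈ U := by
  induction hn : f.support.card using Nat.strong_induction_on generalizing f with
  | _ n ih =>
  by_cases hsub : f.support ⊆ {i}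
  · rwa [← Finsupp.support_subset_singleton.mp hsub]
  obtain ⟨j, hj, hji⟩ : ∃ j ∈ f.support, j ≠ i := by
    by_contra! h
    exact hsub fun x hx => Finset.mem_singleton.2 (h x hx)
  obtain ⟨u, hu⟩ := hχ i j hji.symm
  set g := D u f - χ u j • f
  have hg : ∀ x, g x = (χ u x - χ u j) • f x := fun x => by simp [g, hD, sub_smul]
  have hgU : g ∈ U := sub_mem (hU u f hf) (U.smul_mem _ hf)
  have hcard : g.support.card < n := by
    refine hn ▸ (Finset.card_lt_card ⟨fun x hx => ?_, fun h => ?_⟩)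
    · exact Finsupp.mem_support_iff.2 fun hfx => Finsupp.mem_support_iff.1 hx (by simp [hg, hfx])
    · exact Finsupp.mem_support_iff.1 (h hj) (by simp [hg])
  have := ih _ hcard hgU rfl
  rwa [hg, ← Finsupp.smul_single, U.smul_mem_iff (sub_ne_zero.2 hu)] at this

section Symplectic

open Matrix

variable {k : ℕ}

lemma Jmat_transpose : (Jmat k)ᵀ = -Jmat k := by
  simp [Jmat, fromBlocks_transpose, fromBlocks_neg]

lemma Jmat_transpose_mul_self : (Jmat k)ᵀ * Jmat k = 1 := by
  rw [Jmat_transpose]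
  simp [Jmat, fromBlocks_multiply, fromBlocks_neg, ← fromBlocks_one]

lemma Jmat_mul_transpose_self : Jmat k * (Jmat k)ᵀ = 1 := by
  rw [Jmat_transpose]
  simp [Jmat, fromBlocks_multiply, fromBlocks_neg, ← fromBlocks_one]

lemma bar_eq_vecMul (v : Fin k ⊕ Fin k → ℂ) : bar v = v ᵥ* (Jmat k)ᵀ := by
  ext (i | i) <;> simp [bar, Jmat, vecMul, dotProduct, fromBlocks, one_apply]

lemma vecMulVec_bar (u v : Fin k ⊕ Fin k → ℂ) :
    vecMulVec u (bar v) = vecMulVec u v * (Jmat k)ᵀ := by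
  rw [vecMulVec_mul, bar_eq_vecMul]

lemma isSymm_mul_Jmat_of_mem_sp {A : Matrix (Fin k ⊕ Fin k) (Fin k ⊕ Fin k) ℂ}
    (hA : A ∈ sp k) : (A * Jmat k).IsSymm := by
  rw [sp, mem_skewAdjointMatricesLieSubalgebra, mem_skewAdjointMatricesSubmodule] at hA
  have hA' : Aᵀ * Jmat k = Jmat k * -A := hA
  calc (A * Jmat k)ᵀ = (Jmat k)ᵀ * Aᵀ * (Jmat k * (Jmat k)ᵀ) := by
        rw [transpose_mul, Jmat_mul_transpose_self, Matrix.mul_one]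
    _ = (Jmat k)ᵀ * (Aᵀ * Jmat k) * (Jmat k)ᵀ := by simp only [Matrix.mul_assoc]
    _ = A * Jmat k := by
        rw [hA', ← Matrix.mul_assoc, Jmat_transpose_mul_self, Matrix.one_mul, Jmat_transpose,
          Matrix.neg_mul, Matrix.mul_neg, neg_neg]

def spOuter (v : Fin k ⊕ Fin k → ℂ) : sp k := ⟨vecMulVec v (bar v), outer_mem_sp k v⟩

variable {m : Fin k ⊕ Fin k → ℕ}

lemma single_mem_Gamma (i : Fin k ⊕ Fin k) : (Pi.single i (m i : ℤ)) ∈ Gamma k m := by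
  intro j
  rcases eq_or_ne j i with rfl | h
  · simp
  · simp [h]

theorem sp_le_span_outer (hm : ∀ i, 0 < m i) {A : Matrix (Fin k ⊕ Fin k) (Fin k ⊕ Fin k) ℂ}
    (hA : A ∈ sp k) :
    A ∈ Submodule.span ℂ
      (Set.range fun r : {r : Gamma k m // r ≠ 0} => vecMulVec (zc r.1.1) (bar (zc r.1.1))) := by
  set L := (Gamma k m).toAddSubmonoid.map (AddMonoidHom.compLeft (Int.castAddHom ℂ) _)
  have hL : ∀ i, ∃ c : ℂ, c ≠ 0 ∧ Pi.single i c ∈ L := fun i =>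
    ⟨m i, Nat.cast_ne_zero.mpr (hm i).ne', Pi.single i (m i : ℤ), single_mem_Gamma i,
      by ext j; rcases eq_or_ne j i with rfl | h <;> simp [*]⟩
  have hS := Submodule.mem_map_of_mem (f := LinearMap.mulRight ℂ (Jmat k)ᵀ)
    ((isSymm_mul_Jmat_of_mem_sp hA).mem_span_vecMulVec_self hL)
  rw [Submodule.map_span, LinearMap.mulRight_apply, Matrix.mul_assoc, Jmat_mul_transpose_self, Matrix.mul_one] at hS
  refine Submodule.span_le.2 ?_ hS
  rintro _ ⟨_, ⟨_, ⟨r, hr, rfl⟩, rfl⟩, rfl⟩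
  rcases eq_or_ne (⟨r, hr⟩ : Gamma k m) 0 with h0 | h0
  · obtain rfl : r = 0 := congrArg Subtype.val h0
    simp
  · exact Submodule.subset_span ⟨⟨⟨r, hr⟩, h0⟩, vecMulVec_bar _ _⟩

theorem forall_act_mem_of_spOuter (hm : ∀ i, 0 < m i)
    {W : Type*} [AddCommGroup W] [Module ℂ W] (act : sp k →ₗ⁅ℂ⁆ Module.End ℂ W)
    {V : Submodule ℂ W}
    (hV : ∀ r : Gamma k m, r ≠ 0 → ∀ w ∈ V, act (spOuter (zc (r : Fin k ⊕ Fin k → ℤ))) w ∈ V)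
    (A : sp k) : ∀ w ∈ V, act A w ∈ V := by
  set P : Submodule ℂ (sp k) :=
    (Submodule.compatibleMaps V V).comap (act : sp k →ₗ[ℂ] Module.End ℂ W)
  have hgen : (Set.range fun r : {r : Gamma k m // r ≠ 0} =>
      vecMulVec (zc r.1.1) (bar (zc r.1.1))) ⊆ P.map (sp k).toSubmodule.subtype := by
    rintro _ ⟨r, rfl⟩
    exact ⟨spOuter _, fun w hw => hV r.1 r.2 w hw, rfl⟩
  obtain ⟨B, hB, hBA⟩ := Submodule.span_le.2 hgen (sp_le_span_outer hm A.2)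
  obtain rfl : B = A := Subtype.ext hBA
  exact fun w hw => hB hw

end Symplectic

lemma pair_single_left {k : ℕ} (i : Fin k ⊕ Fin k) (v : Fin k ⊕ Fin k → ℂ) :
    pair (Pi.single i 1) v = v i := by
  simp [pair, Pi.single_apply]

section LoopModule

variable {k : ℕ} {m : Fin k ⊕ Fin k → ℕ} {W : Type*} [AddCommGroup W] [Module ℂ W]

lemma muOp_single (r p : Gamma k m) (w : W) :
    muOp W r (Finsupp.single p w) = Finsupp.single (p + r) w := by
  simp [muOp]

lemma deltaOp_apply (α u : Fin k ⊕ Fin k → ℂ) (f : Gamma k m →₀ W) (p : Gamma k m) :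
    deltaOp W α u f p = pair u (α + zc (p : Fin k ⊕ Fin k → ℤ)) • f p := by
  induction f using Finsupp.induction_linear with
  | zero => simp
  | add f g hf hg => simp [hf, hg]
  | single q w =>
    rcases eq_or_ne q p with rfl | h
    · simp [deltaOp]
    · simp [deltaOp, h]

lemma piOp_single (act : sp k →ₗ⁅ℂ⁆ Module.End ℂ W) (β : Fin k ⊕ Fin k → ℂ)
    (r p : Gamma k m) (w : W) :
    piOp act β r (Finsupp.single p w) = Finsupp.single (p + r)
      (pair (bar (zc (r : Fin k ⊕ Fin k → ℤ))) (zc (p : Fin k ⊕ Fin k → ℤ) + β) • w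
        + act (spOuter (zc (r : Fin k ⊕ Fin k → ℤ))) w) := by
  simp [piOp, spOuter]

variable {U : Submodule ℂ (Gamma k m →₀ W)}

lemma single_mem_of_muOp_mem (hμ : ∀ r : Gamma k m, ∀ f ∈ U, muOp W r f ∈ U)
    {p : Gamma k m} {w : W} (h : Finsupp.single p w ∈ U) (q : Gamma k m) :
    Finsupp.single q w ∈ U := by
  simpa [muOp_single] using hμ (q - p) _ h

lemma mem_iff_forall_apply_mem_comap (α : Fin k ⊕ Fin k → ℂ)
    (hδ : ∀ u : Fin k ⊕ Fin k → ℂ, ∀ f ∈ U, deltaOp W α u f ∈ U)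
    (hμ : ∀ r : Gamma k m, ∀ f ∈ U, muOp W r f ∈ U) (f : Gamma k m →₀ W) :
    f ∈ U ↔ ∀ p, f p ∈ U.comap (Finsupp.lsingle 0) := by
  refine ⟨fun hf p => ?_, fun hf => ?_⟩
  · have hsep : ∀ p q : Gamma k m, p ≠ q → ∃ u : Fin k ⊕ Fin k → ℂ,
        pair u (α + zc (p : Fin k ⊕ Fin k → ℤ)) ≠ pair u (α + zc (q : Fin k ⊕ Fin k → ℤ)) := by
      intro p q hpq
      obtain ⟨i, hi⟩ := Function.ne_iff.mp (Subtype.coe_ne_coe.mpr hpq)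
      exact ⟨Pi.single i 1, by simpa [pair_single_left, zc] using hi⟩
    exact single_mem_of_muOp_mem hμ
      (U.single_apply_mem_of_separating _ _ (deltaOp_apply α) hsep hδ hf p) 0
  · rw [← f.sum_single]
    exact U.sum_mem fun p _ => single_mem_of_muOp_mem hμ (hf p) p

lemma spOuter_mem_comap (act : sp k →ₗ⁅ℂ⁆ Module.End ℂ W) (β : Fin k ⊕ Fin k → ℂ)
    (hπ : ∀ r : Gamma k m, r ≠ 0 → ∀ f ∈ U, piOp act β r f ∈ U)
    (hμ : ∀ r : Gamma k m, ∀ f ∈ U, muOp W r f ∈ U) (r : Gamma k m) (hr : r ≠ 0)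
    (w : W) (hw : w ∈ U.comap (Finsupp.lsingle 0)) :
    act (spOuter (zc (r : Fin k ⊕ Fin k → ℤ))) w ∈ U.comap (Finsupp.lsingle 0) := by
  have hw' : Finsupp.single (0 : Gamma k m) w ∈ U := hw
  have h0 := single_mem_of_muOp_mem hμ (piOp_single act β r 0 w ▸ hπ r hr _ hw') 0
  rwa [Finsupp.single_add, ← Finsupp.smul_single, U.add_mem_iff_right (U.smul_mem _ hw')] at h0

end LoopModule

theorem stmt10_general (k : ℕ) (m : Fin k ⊕ Fin k → ℕ) (hm : ∀ i, 0 < m i)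
    (W : Type*) [AddCommGroup W] [Module ℂ W]
    (act : sp k →ₗ⁅ℂ⁆ Module.End ℂ W)
    (hirr : ∀ U : Submodule ℂ W, (∀ A : sp k, ∀ w ∈ U, act A w ∈ U) → U = ⊥ ∨ U = ⊤)
    (α β : Fin k ⊕ Fin k → ℂ) :
    ∀ U : Submodule ℂ (Gamma k m →₀ W),
      (∀ r : Gamma k m, r ≠ 0 → ∀ f ∈ U, piOp act β r f ∈ U) →
      (∀ u : Fin k ⊕ Fin k → ℂ, ∀ f ∈ U, deltaOp W α u f ∈ U) →
      (∀ r : Gamma k m, ∀ f ∈ U, muOp W r f ∈ U) →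
      U = ⊥ ∨ U = ⊤ := by
  intro U hπ hδ hμ
  have hU := mem_iff_forall_apply_mem_comap α hδ hμ
  rcases hirr _ (forall_act_mem_of_spOuter hm act (spOuter_mem_comap act β hπ hμ)) with h | h
  · refine Or.inl (U.eq_bot_iff.2 fun f hf => Finsupp.ext fun p => ?_)
    simpa [h] using (hU f).1 hf p
  · exact Or.inr (U.eq_top_iff'.2 fun f => (hU f).2 fun p => h ▸ Submodule.mem_top)

/-- if `W` is a nonzero finite dimensional irreducible module over
`𝔰𝔭_{2k}(ℂ)`, then for any `α, β ∈ ℂⁿ` the only subspaces of `L(W) = W ⊗ ℂ[Γ]` invariant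
under all the operators `π(r)` (`0 ≠ r ∈ Γ`), `δ(u)` (`u ∈ ℂⁿ`), `μ(r)` (`r ∈ Γ`) are
`0` and `L(W)`. -/
theorem stmt10 (k : ℕ) (hk : 1 ≤ k) (m : Fin k ⊕ Fin k → ℕ) (hm : ∀ i, 0 < m i)
    (W : Type*) [AddCommGroup W] [Module ℂ W] [FiniteDimensional ℂ W] [Nontrivial W]
    (act : sp k →ₗ⁅ℂ⁆ Module.End ℂ W)
    (hirr : ∀ U : Submodule ℂ W, (∀ A : sp k, ∀ w ∈ U, act A w ∈ U) → U = ⊥ ∨ U = ⊤)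
    (α β : Fin k ⊕ Fin k → ℂ) :
    ∀ U : Submodule ℂ (Gamma k m →₀ W),
      (∀ r : Gamma k m, r ≠ 0 → ∀ f ∈ U, piOp act β r f ∈ U) →
      (∀ u : Fin k ⊕ Fin k → ℂ, ∀ f ∈ U, deltaOp W α u f ∈ U) →
      (∀ r : Gamma k m, ∀ f ∈ U, muOp W r f ∈ U) →
      U = ⊥ ∨ U = ⊤ :=
  stmt10_general k m hm W act hirr α β
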